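/- Let (Λ,η) be a special isothermic surface in S^n of type d ∈ ℕ₀ with respect to a polynomial conserved quantity p(t), and let Λ̂ be a Darboux transform of (Λ,η) with parameter m. Then (Λ̂,η̂) is a special isothermic surface of type d+1 with respect to a polynomial conserved quantity p̂(t) satisfying p̂(0) = p(0). -/

import Mathlib

noncomputable section

open Finset

/-- Minkowski space `ℝ^{n+1,1}`, modelled on `Fin (n+2) → ℝ`. -/
abbrev MV (n : ℕ) : Type := EuclideanSpace ℝ (Fin (n + 2))

/-- The Minkowski inner product of signature `(n+1,1)`. -/
def mink (n : ℕ) (x y : MV n) : ℝ :=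
  ∑ i : Fin (n + 1), x i.castSucc * y i.castSucc
    - x (Fin.last (n + 1)) * y (Fin.last (n + 1))

/-- The light cone `L ⊂ ℝ^{n+1,1}`. -/
def LightCone (n : ℕ) : Set (MV n) := {v | v ≠ 0 ∧ mink n v v = 0}

/-- The skew endomorphism `u ∧ v`, acting by `(u ∧ v) w = (u,w)v − (v,w)u`. -/
def wedge (n : ℕ) (u v w : MV n) : MV n :=
  mink n u w • v - mink n v w • u

/-- The surface domain: a two-dimensional coordinate chart. -/
abbrev Surf : Type := ℝ × ℝ

/-- the coordinate direction ∂/∂u -/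
def du : Surf := (1, 0)

/-- the coordinate direction ∂/∂v -/
def dv : Surf := (0, 1)

/-- partial derivative of a section in a coordinate direction -/
def pd {n : ℕ} (e : Surf) (f : Surf → MV n) (x : Surf) : MV n :=
  fderiv ℝ f x e

lemma mink_add_left (n : ℕ) (a b c : MV n) :
    mink n (a + b) c = mink n a c + mink n b c := by
  simp [mink, PiLp.add_apply, add_mul, Finset.sum_add_distrib]; ring

lemma mink_smul_left (n : ℕ) (r : ℝ) (a c : MV n) :
    mink n (r • a) c = r * mink n a c := by
  simp [mink, PiLp.smul_apply, smul_eq_mul, mul_sub, Finset.mul_sum, mul_assoc]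

lemma mink_zero_left (n : ℕ) (c : MV n) : mink n 0 c = 0 := by
  simp [mink]

/-- An isothermic surface `(Λ,η)` in `S^n = P(L)`, given by a nowhere-zero null
lift `F` of the immersion `Λ` together with the 1-form
`η = F ∧ W₁ du + F ∧ W₂ dv` with values in `Λ ∧ Λ^⊥`. -/
structure IsothermicSurface (n : ℕ) : Type where
  F : Surf → MV n
  W₁ : Surf → MV n
  W₂ : Surf → MV n
  smooth_F : ContDiff ℝ (⊤ : ℕ∞) F
  smooth_W₁ : ContDiff ℝ (⊤ : ℕ∞) W₁
  smooth_W₂ : ContDiff ℝ (⊤ : ℕ∞) W₂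
  F_ne : ∀ x, F x ≠ 0
  F_null : ∀ x, mink n (F x) (F x) = 0
  immersed : ∀ x, LinearIndependent ℝ ![F x, pd du F x, pd dv F x]
  W₁_perp : ∀ x, mink n (F x) (W₁ x) = 0
  W₂_perp : ∀ x, mink n (F x) (W₂ x) = 0
  eta_ne : ∃ x z, wedge n (F x) (W₁ x) z ≠ 0 ∨ wedge n (F x) (W₂ x) z ≠ 0
  eta_closed : ∀ x z,
    fderiv ℝ (fun y => wedge n (F y) (W₂ y) z) x du
      = fderiv ℝ (fun y => wedge n (F y) (W₁ y) z) x dv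

/-- `s` is a parallel section for the flat connection `∇^t = d + tη`. -/
def ParallelSection (n : ℕ) (S : IsothermicSurface n) (t : ℝ)
    (s : Surf → MV n) : Prop :=
  ∀ x, fderiv ℝ s x du + t • wedge n (S.F x) (S.W₁ x) (s x) = 0
     ∧ fderiv ℝ s x dv + t • wedge n (S.F x) (S.W₂ x) (s x) = 0

/-- A polynomial conserved quantity of degree `d` of the isothermic surface
`(Λ,η)`: a polynomial `p(t) = Σ_{k=0}^d p_k t^k` of (smooth) sections, of exact
degree `d`, with `∇^t p(t) = 0` for all `t`. -/
structure PolyConservedQuantity (n : ℕ) (S : IsothermicSurface n) (d : ℕ) : Type where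
  coeff : ℕ → Surf → MV n
  smooth : ∀ k, ContDiff ℝ (⊤ : ℕ∞) (coeff k)
  coeff_eq_zero : ∀ k, d < k → coeff k = 0
  top_ne : coeff d ≠ 0
  conserved : ∀ t : ℝ, ParallelSection n S t
    (fun x => ∑ k ∈ Finset.range (d + 1), t ^ k • coeff k x)

/-- evaluation `p(t)` of a polynomial conserved quantity -/
def pcEval {n : ℕ} {S : IsothermicSurface n} {d : ℕ}
    (p : PolyConservedQuantity n S d) (t : ℝ) (x : Surf) : MV n :=
  ∑ k ∈ Finset.range (d + 1), t ^ k • p.coeff k x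

/-- `(Λ,η)` is a special isothermic surface of type `d`. -/
def SpecialOfType (n : ℕ) (S : IsothermicSurface n) (d : ℕ) : Prop :=
  Nonempty (PolyConservedQuantity n S d)

/-- `p₀ ∈ ⟨w⟩`: the polynomial conserved quantity exhibits `(Λ,η)` as special
isothermic in the space-form `E(w)`. -/
def InSpaceForm {n : ℕ} {S : IsothermicSurface n} {d : ℕ}
    (p : PolyConservedQuantity n S d) (w : MV n) : Prop :=
  ∃ c : ℝ, ∀ x, p.coeff 0 x = c • w

/-- fullness: the image of `Λ` lies in no proper subsphere -/
def Full (n : ℕ) (S : IsothermicSurface n) : Prop :=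
  ¬ ∃ p : MV n, p ≠ 0 ∧ ∀ x, mink n p (S.F x) = 0
/-- A Darboux transform `Λ̂` of `(Λ,η)` with parameter `m`, given by a
`∇^m`-parallel null lift `G` spanning an immersed surface with `Λ̂ ∩ Λ = 0`. -/
structure DarbouxTransform (n : ℕ) (S : IsothermicSurface n) (m : ℝ) : Type where
  G : Surf → MV n
  smooth_G : ContDiff ℝ (⊤ : ℕ∞) G
  G_ne : ∀ x, G x ≠ 0
  G_null : ∀ x, mink n (G x) (G x) = 0
  immersed : ∀ x, LinearIndependent ℝ ![G x, pd du G x, pd dv G x]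
  disjoint : ∀ x, G x ∉ Submodule.span ℝ {S.F x}
  parallel : ParallelSection n S m G

/-- The gauge transformation `Γ_{⟨F⟩}^{⟨G⟩}(c)`: acts as `c` on `⟨G⟩`, as `1` on
`(⟨F⟩ ⊕ ⟨G⟩)^⊥` and as `c⁻¹` on `⟨F⟩`. -/
def gaugeG (n : ℕ) (F G : MV n) (c : ℝ) (z : MV n) : MV n :=
  ((mink n G z / mink n F G) / c) • F
    + (c * (mink n F z / mink n F G)) • G
    + (z - (mink n G z / mink n F G) • F - (mink n F z / mink n F G) • G)

/-- `Γ_Λ^{Λ̂}(1 − t/m) · (d + tη) = d + tη̂` for all `t ≠ m`: the gauge relation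
between the pencils of flat connections of an isothermic surface `S` and of (an
isothermic structure `T` on) its Darboux transform with parameter `m`. -/
def GaugeRel (n : ℕ) (S T : IsothermicSurface n) (m : ℝ) : Prop :=
  ∀ t : ℝ, t ≠ m → ∀ s : Surf → MV n, ContDiff ℝ (⊤ : ℕ∞) s → ∀ x : Surf,
    (fderiv ℝ (fun y => gaugeG n (S.F y) (T.F y) (1 - t / m) (s y)) x du
        + t • wedge n (T.F x) (T.W₁ x) (gaugeG n (S.F x) (T.F x) (1 - t / m) (s x))
      = gaugeG n (S.F x) (T.F x) (1 - t / m)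
          (fderiv ℝ s x du + t • wedge n (S.F x) (S.W₁ x) (s x)))
    ∧ (fderiv ℝ (fun y => gaugeG n (S.F y) (T.F y) (1 - t / m) (s y)) x dv
        + t • wedge n (T.F x) (T.W₂ x) (gaugeG n (S.F x) (T.F x) (1 - t / m) (s x))
      = gaugeG n (S.F x) (T.F x) (1 - t / m)
          (fderiv ℝ s x dv + t • wedge n (S.F x) (S.W₂ x) (s x)))

/-- `Λ̂ = ⟨p(m)⟩` with `(p(m),p(m)) = 0`: the Darboux transform `D` is a
complementary surface of `(Λ,η)` with respect to `p(t)`. -/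
def IsComplementary (n : ℕ) {S : IsothermicSurface n} {d : ℕ}
    (p : PolyConservedQuantity n S d) {m : ℝ} (D : DarbouxTransform n S m) : Prop :=
  (∀ x, mink n (pcEval p m x) (pcEval p m x) = 0) ∧
  (∀ x, Submodule.span ℝ {D.G x} = Submodule.span ℝ {pcEval p m x})

/-- `m` is a repeated root of the (constant-coefficient) polynomial `(p(t),p(t))`. -/
def IsRepeatedRootAt {n : ℕ} {S : IsothermicSurface n} {d : ℕ}
    (p : PolyConservedQuantity n S d) (m : ℝ) : Prop :=
  ∀ x, mink n (pcEval p m x) (pcEval p m x) = 0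
    ∧ deriv (fun t : ℝ => mink n (pcEval p t x) (pcEval p t x)) m = 0
/-- metric coefficient `g₁₁ = (F_u,F_u)` of the induced metric -/
def gUU (n : ℕ) (F : Surf → MV n) (x : Surf) : ℝ := mink n (pd du F x) (pd du F x)

/-- metric coefficient `g₁₂ = (F_u,F_v)` -/
def gUV (n : ℕ) (F : Surf → MV n) (x : Surf) : ℝ := mink n (pd du F x) (pd dv F x)

/-- metric coefficient `g₂₂ = (F_v,F_v)` -/
def gVV (n : ℕ) (F : Surf → MV n) (x : Surf) : ℝ := mink n (pd dv F x) (pd dv F x)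

/-- `(𝐇, N)`, the inner product of the mean curvature vector of `F` (in a
space-form `E(w)`) with a normal field `N`: half the trace with respect to the
induced metric of the `N`-component of the second fundamental form. -/
def meanCurv (n : ℕ) (F N : Surf → MV n) (x : Surf) : ℝ :=
  (gVV n F x * mink n (pd du (pd du F) x) (N x)
    - 2 * gUV n F x * mink n (pd du (pd dv F) x) (N x)
    + gUU n F x * mink n (pd dv (pd dv F) x) (N x))
  / (2 * (gUU n F x * gVV n F x - gUV n F x ^ 2))

/-- `N` is a unit normal field of the lift `F : Σ → E(w)`. -/
def IsUnitNormal (n : ℕ) (F N : Surf → MV n) (w : MV n) : Prop :=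
  (∀ x, mink n (N x) (N x) = 1) ∧ (∀ x, mink n (N x) w = 0)
    ∧ (∀ x, mink n (N x) (F x) = 0)
    ∧ (∀ x, mink n (N x) (pd du F x) = 0) ∧ (∀ x, mink n (N x) (pd dv F x) = 0)

/-- `N` is parallel for the normal connection of `F : Σ → E(w)`: the derivative
of `N` has no component in the normal bundle of `F` in `E(w)`. -/
def ParallelNormal (n : ℕ) (F N : Surf → MV n) (w : MV n) : Prop :=
  ∀ x e, fderiv ℝ N x e ∈ Submodule.span ℝ {F x, pd du F x, pd dv F x, w}

/-- the chart coordinates `(u,v)` are conformal curvature line coordinates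
corresponding to `η`, with conformal factor `e^{2θ}`:
`I = e^{2θ}(du² + dv²)` and `η = e^{−2θ} F ∧ (−F_u du + F_v dv)`. -/
def ConformalCoords (n : ℕ) (S : IsothermicSurface n) (θ : Surf → ℝ) : Prop :=
  ContDiff ℝ (⊤ : ℕ∞) θ
  ∧ (∀ x, mink n (pd du S.F x) (pd du S.F x) = Real.exp (2 * θ x))
  ∧ (∀ x, mink n (pd dv S.F x) (pd dv S.F x) = Real.exp (2 * θ x))
  ∧ (∀ x, mink n (pd du S.F x) (pd dv S.F x) = 0)
  ∧ (∀ x z, wedge n (S.F x) (S.W₁ x) z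
      = Real.exp (-(2 * θ x)) • wedge n (S.F x) (-pd du S.F x) z)
  ∧ (∀ x z, wedge n (S.F x) (S.W₂ x) z
      = Real.exp (-(2 * θ x)) • wedge n (S.F x) (pd dv S.F x) z)

/-- the second fundamental form of the lift `F` in `E(w)` with respect to the
unit normal `N` is `II = e^{2θ}(k₁ du² + k₂ dv²)`. -/
def PrincipalCurvatures (n : ℕ) (S : IsothermicSurface n) (N : Surf → MV n)
    (θ k₁ k₂ : Surf → ℝ) : Prop :=
  (∀ x, mink n (pd du (pd du S.F) x) (N x) = Real.exp (2 * θ x) * k₁ x)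
  ∧ (∀ x, mink n (pd du (pd dv S.F) x) (N x) = 0)
  ∧ (∀ x, mink n (pd dv (pd dv S.F) x) (N x) = Real.exp (2 * θ x) * k₂ x)

/-- partial derivative of a real function on the surface -/
def pdR (e : Surf) (f : Surf → ℝ) (x : Surf) : ℝ := fderiv ℝ f x e
/-- `(Λ^c, η^c)` is the Christoffel transform of `(Λ,η)` with respect to the
pair `(v∞, v₀)`, witnessed by the stereoprojections `f`, `f^c` into
`ℝ^n = ⟨v₀,v∞⟩^⊥`:  `F = exp(f ∧ v∞)v₀`, `F^c = exp(f^c ∧ v₀)v∞`,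
`η = Ad(exp(f ∧ v∞))(df^c ∧ v₀)` and `η^c = Ad(exp(f^c ∧ v₀))(df ∧ v∞)`. -/
def IsChristoffelPair (n : ℕ) (S Sc : IsothermicSurface n) (vinf v0 : MV n)
    (f fc : Surf → MV n) : Prop :=
  vinf ∈ LightCone n ∧ v0 ∈ LightCone n ∧ mink n v0 vinf = -1
  ∧ ContDiff ℝ (⊤ : ℕ∞) f ∧ ContDiff ℝ (⊤ : ℕ∞) fc
  ∧ (∀ x, mink n (f x) v0 = 0) ∧ (∀ x, mink n (f x) vinf = 0)
  ∧ (∀ x, mink n (fc x) v0 = 0) ∧ (∀ x, mink n (fc x) vinf = 0)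
  ∧ (∀ x, S.F x = v0 + f x + (mink n (f x) (f x) / 2) • vinf)
  ∧ (∀ x, Sc.F x = vinf + fc x + (mink n (fc x) (fc x) / 2) • v0)
  ∧ (∀ x z, wedge n (S.F x) (S.W₁ x) z
      = wedge n (pd du fc x + mink n (f x) (pd du fc x) • vinf) (S.F x) z)
  ∧ (∀ x z, wedge n (S.F x) (S.W₂ x) z
      = wedge n (pd dv fc x + mink n (f x) (pd dv fc x) • vinf) (S.F x) z)
  ∧ (∀ x z, wedge n (Sc.F x) (Sc.W₁ x) z
      = wedge n (pd du f x + mink n (fc x) (pd du f x) • v0) (Sc.F x) z)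
  ∧ (∀ x z, wedge n (Sc.F x) (Sc.W₂ x) z
      = wedge n (pd dv f x + mink n (fc x) (pd dv f x) • v0) (Sc.F x) z)

/-- `Φ` is an orthogonal gauge transformation with `Φ · (d + sη) = d`. -/
def IsTGauge (n : ℕ) (S : IsothermicSurface n) (s : ℝ)
    (Φ : Surf → MV n → MV n) : Prop :=
  (∀ x, IsLinearMap ℝ (Φ x))
  ∧ (∀ x z z', mink n (Φ x z) (Φ x z') = mink n z z')
  ∧ (∀ σ : Surf → MV n, ContDiff ℝ (⊤ : ℕ∞) σ → ∀ x,
      (fderiv ℝ (fun y => Φ y (σ y)) x du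
         = Φ x (fderiv ℝ σ x du + s • wedge n (S.F x) (S.W₁ x) (σ x)))
      ∧ (fderiv ℝ (fun y => Φ y (σ y)) x dv
         = Φ x (fderiv ℝ σ x dv + s • wedge n (S.F x) (S.W₂ x) (σ x))))

/-- `(Λ_s, η_s)` is the T-transform of `(Λ,η)` associated to `Φ_s`:
`Λ_s = Φ_s Λ` and `η_s = Ad(Φ_s) η`. -/
def IsTTransform (n : ℕ) (S : IsothermicSurface n) (s : ℝ)
    (Φ : Surf → MV n → MV n) (Ss : IsothermicSurface n) : Prop :=
  IsTGauge n S s Φ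
  ∧ (∀ x, Ss.F x = Φ x (S.F x))
  ∧ (∀ x z, wedge n (Ss.F x) (Ss.W₁ x) (Φ x z) = Φ x (wedge n (S.F x) (S.W₁ x) z))
  ∧ (∀ x z, wedge n (Ss.F x) (Ss.W₂ x) (Φ x z) = Φ x (wedge n (S.F x) (S.W₂ x) z))

/-- orthogonal complement with respect to the Minkowski form -/
def mperp (n : ℕ) (U : Submodule ℝ (MV n)) : Submodule ℝ (MV n) where
  carrier := {v | ∀ u ∈ U, mink n v u = 0}
  add_mem' := by
    intro a b ha hb u hu
    rw [mink_add_left, ha u hu, hb u hu, add_zero]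
  zero_mem' := by
    intro u hu; exact mink_zero_left n u
  smul_mem' := by
    intro r a ha u hu
    rw [mink_smul_left, ha u hu, mul_zero]

/-- the spherical system of `Λ` and a Darboux transform `Λ̂ = ⟨G⟩`: the
`(n−2)`-sphere congruence `C = Λ ⊕ Λ̂ ⊕ V_R^⊥`, `V_R = Λ^{(1)} ⊕ Λ̂`. -/
def sphericalSystem (n : ℕ) (S : IsothermicSurface n) (G : Surf → MV n)
    (x : Surf) : Submodule ℝ (MV n) :=
  Submodule.span ℝ {S.F x, G x}
    ⊔ mperp n (Submodule.span ℝ {S.F x, pd du S.F x, pd dv S.F x, G x})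

/-- the sphere-planes congruence `P = C + ⟨w⟩` of `Λ` and `Λ̂ = ⟨G⟩` with
respect to `w`. -/
def spherePlanes (n : ℕ) (S : IsothermicSurface n) (G : Surf → MV n)
    (w : MV n) (x : Surf) : Submodule ℝ (MV n) :=
  sphericalSystem n S G x ⊔ Submodule.span ℝ {w}
/-! ### Auxiliary material for `darboux_transform_type_succ` -/

section DarbouxAux

open Finset

lemma mink_comm (n : ℕ) (x y : MV n) : mink n x y = mink n y x := by
  simp [mink, mul_comm]

lemma mink_add_right (n : ℕ) (a b c : MV n) :
    mink n a (b + c) = mink n a b + mink n a c := by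
  rw [mink_comm, mink_add_left, mink_comm n b a, mink_comm n c a]

lemma mink_smul_right (n : ℕ) (r : ℝ) (a c : MV n) :
    mink n a (r • c) = r * mink n a c := by
  rw [mink_comm, mink_smul_left, mink_comm]

lemma mink_zero_right (n : ℕ) (a : MV n) : mink n a 0 = 0 := by
  rw [mink_comm, mink_zero_left]

lemma mink_sub_left (n : ℕ) (a b c : MV n) :
    mink n (a - b) c = mink n a c - mink n b c := by
  have : a - b = a + (-1 : ℝ) • b := by
    rw [neg_one_smul]; abel
  rw [this, mink_add_left, mink_smul_left]; ring

lemma mink_sub_right (n : ℕ) (a b c : MV n) :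
    mink n a (b - c) = mink n a b - mink n a c := by
  rw [mink_comm, mink_sub_left, mink_comm n b a, mink_comm n c a]

lemma mink_sum_right (n : ℕ) (a : MV n) {ι : Type*} (s : Finset ι) (f : ι → MV n) :
    mink n a (∑ i ∈ s, f i) = ∑ i ∈ s, mink n a (f i) := by
  classical
  induction s using Finset.induction_on with
  | empty => simp [mink_zero_right]
  | @insert i s' hx ih => rw [Finset.sum_insert hx, Finset.sum_insert hx,
      mink_add_right, ih]

lemma wedge_smul_right (n : ℕ) (u v : MV n) (r : ℝ) (w : MV n) :
    wedge n u v (r • w) = r • wedge n u v w := by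
  simp only [wedge, mink_smul_right, smul_sub, smul_smul]

lemma wedge_zero_right (n : ℕ) (u v : MV n) : wedge n u v 0 = 0 := by
  simp [wedge, mink_zero_right]

lemma wedge_add_right (n : ℕ) (u v : MV n) (w w' : MV n) :
    wedge n u v (w + w') = wedge n u v w + wedge n u v w' := by
  simp only [wedge, mink_add_right, add_smul]; abel

lemma wedge_sum_right (n : ℕ) (u v : MV n) {ι : Type*} (s : Finset ι) (f : ι → MV n) :
    wedge n u v (∑ i ∈ s, f i) = ∑ i ∈ s, wedge n u v (f i) := by
  classical
  induction s using Finset.induction_on with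
  | empty => simp [wedge_zero_right]
  | @insert i s' hx ih => rw [Finset.sum_insert hx, Finset.sum_insert hx,
      wedge_add_right, ih]

lemma contDiff_coord {n : ℕ} {E : Type*} [NormedAddCommGroup E] [NormedSpace ℝ E]
    {f : E → MV n} (hf : ContDiff ℝ (⊤ : ℕ∞) f) (i : Fin (n + 2)) :
    ContDiff ℝ (⊤ : ℕ∞) fun x => f x i := by
  have h := ((EuclideanSpace.proj i : EuclideanSpace ℝ (Fin (n + 2)) →L[ℝ] ℝ).contDiff).comp hf
  exact h

lemma mink_contDiff {n : ℕ} {E : Type*} [NormedAddCommGroup E] [NormedSpace ℝ E]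
    {f g : E → MV n} (hf : ContDiff ℝ (⊤ : ℕ∞) f) (hg : ContDiff ℝ (⊤ : ℕ∞) g) :
    ContDiff ℝ (⊤ : ℕ∞) fun x => mink n (f x) (g x) := by
  unfold mink
  exact ContDiff.sub
    (ContDiff.sum fun i _ => (contDiff_coord hf _).mul (contDiff_coord hg _))
    ((contDiff_coord hf _).mul (contDiff_coord hg _))

lemma mink_continuous_right {n : ℕ} (a : MV n) :
    Continuous fun z : MV n => mink n a z :=
  (mink_contDiff contDiff_const contDiff_id).continuous

/-- a vector-coefficient polynomial that vanishes identically has zero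
coefficients -/
lemma poly_vec_zero {E : Type*} [NormedAddCommGroup E] [NormedSpace ℝ E] :
    ∀ (N : ℕ) (v : ℕ → E), (∀ t : ℝ, ∑ k ∈ Finset.range N, t ^ k • v k = 0) →
      ∀ k < N, v k = 0 := by
  intro N
  induction N with
  | zero => exact fun v _ k hk => absurd hk (Nat.not_lt_zero k)
  | succ N ih =>
    intro v h
    have h0 : v 0 = 0 := by
      have h' := h 0
      rw [Finset.sum_range_succ'] at h'
      simpa using h'
    have htail : ∀ t : ℝ, t ≠ 0 → ∑ k ∈ Finset.range N, t ^ k • v (k + 1) = 0 := by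
      intro t ht
      have h' := h t
      rw [Finset.sum_range_succ'] at h'
      rw [h0] at h'
      simp only [smul_zero, add_zero] at h'
      have h'' : t • ∑ k ∈ Finset.range N, t ^ k • v (k + 1) = 0 := by
        rw [Finset.smul_sum]
        rw [← h']
        exact Finset.sum_congr rfl fun k _ => by
          rw [smul_smul, pow_succ]; ring_nf
      rcases smul_eq_zero.mp h'' with h3 | h3
      · exact absurd h3 ht
      · exact h3
    have hall : ∀ t : ℝ, ∑ k ∈ Finset.range N, t ^ k • v (k + 1) = 0 := by
      have hcont : Continuous fun t : ℝ => ∑ k ∈ Finset.range N, t ^ k • v (k + 1) :=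
        continuous_finset_sum _ fun k _ => (continuous_pow k).smul continuous_const
      have := Continuous.ext_on (dense_compl_singleton (0 : ℝ)) hcont continuous_const
        (fun t ht => htail t (Set.mem_compl_singleton_iff.mp ht))
      exact fun t => congrFun this t
    intro k hk
    match k with
    | 0 => exact h0
    | (j + 1) => exact ih (fun i => v (i + 1)) hall j (by omega)

lemma fderiv_sum_smul {n : ℕ} {c : ℕ → Surf → MV n} {x : Surf}
    (hc : ∀ k, DifferentiableAt ℝ (c k) x) (N : ℕ) (t : ℝ) (e : Surf) :
    fderiv ℝ (fun y => ∑ k ∈ Finset.range N, t ^ k • c k y) x e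
      = ∑ k ∈ Finset.range N, t ^ k • fderiv ℝ (c k) x e := by
  have h1 : fderiv ℝ (fun y => ∑ k ∈ Finset.range N, t ^ k • c k y) x
      = ∑ k ∈ Finset.range N, t ^ k • fderiv ℝ (c k) x := by
    rw [fderiv_fun_sum (A := fun i y => t ^ i • c i y) (fun i _ => (hc i).const_smul (t ^ i))]
    exact Finset.sum_congr rfl fun i _ => fderiv_fun_const_smul (hc i) _
  rw [h1]
  simp [ContinuousLinearMap.sum_apply]

/-- two null vectors which are not parallel are not `mink`-orthogonal -/
lemma mink_ne_zero_of_null {n : ℕ} (F G : MV n) (hFne : F ≠ 0)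
    (hFnull : mink n F F = 0) (hGnull : mink n G G = 0)
    (hdis : G ∉ Submodule.span ℝ {F}) : mink n F G ≠ 0 := by
  have key0 : ∀ v : MV n, mink n v v = 0 → v (Fin.last (n + 1)) = 0 → v = 0 := by
    intro v hnull hlast
    have hsum : ∑ i : Fin (n + 1), v i.castSucc * v i.castSucc = 0 := by
      unfold mink at hnull
      rw [hlast] at hnull
      simpa using hnull
    have hall : ∀ i : Fin (n + 1), v i.castSucc = 0 := by
      intro i
      have := (Finset.sum_eq_zero_iff_of_nonneg
        (fun i _ => mul_self_nonneg (v i.castSucc))).mp hsum i (Finset.mem_univ i)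
      exact mul_self_eq_zero.mp this
    ext i
    induction i using Fin.lastCases with
    | last => exact hlast
    | cast j => exact hall j
  set lF := F (Fin.last (n + 1)) with hlFdef
  set lG := G (Fin.last (n + 1)) with hlGdef
  have hlF : lF ≠ 0 := fun h => hFne (key0 F hFnull h)
  intro hFG
  set v : MV n := lG • F - lF • G with hv
  have hvlast : v (Fin.last (n + 1)) = 0 := by
    simp only [hv, PiLp.sub_apply, PiLp.smul_apply, smul_eq_mul]
    rw [← hlFdef, ← hlGdef]; ring
  have hvnull : mink n v v = 0 := by
    rw [hv]
    simp only [mink_sub_left, mink_sub_right, mink_smul_left, mink_smul_right,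
      hFnull, hGnull, hFG, mink_comm n G F]
    ring
  have hv0 : v = 0 := key0 v hvnull hvlast
  apply hdis
  rw [Submodule.mem_span_singleton]
  refine ⟨lF⁻¹ * lG, ?_⟩
  have h1 : lG • F = lF • G := by
    have := sub_eq_zero.mp (hv ▸ hv0)
    exact this
  rw [mul_smul, h1, smul_smul, inv_mul_cancel₀ hlF, one_smul]

/-- the previous coefficient, `p_{k-1}` (with `p_{-1} = 0`) -/
def pprevc {n : ℕ} {S : IsothermicSurface n} {d : ℕ}
    (p : PolyConservedQuantity n S d) : ℕ → Surf → MV n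
  | 0 => fun _ => 0
  | (k + 1) => p.coeff k

/-- the coefficients of the polynomial conserved quantity of the Darboux
transform:  `p̂(t) = Γ(1-t/m)((1-t/m) p(t))` -/
def phc {n : ℕ} {S : IsothermicSurface n} {d : ℕ} (T : IsothermicSurface n)
    (p : PolyConservedQuantity n S d) (m : ℝ) : ℕ → Surf → MV n
  | 0 => p.coeff 0
  | (k + 1) => fun x =>
      p.coeff (k + 1) x - m⁻¹ • p.coeff k x
        + (m⁻¹ * (mink n (T.F x) (p.coeff k x) / mink n (S.F x) (T.F x))) • S.F x
        - (m⁻¹ * (mink n (S.F x) (p.coeff k x) / mink n (S.F x) (T.F x))) • T.F x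
        + (m⁻¹ * m⁻¹ * (mink n (S.F x) (pprevc p k x) / mink n (S.F x) (T.F x))) • T.F x

/-- the hierarchy of equations encoded by a polynomial conserved quantity -/
lemma hierarchy {n d : ℕ} {S : IsothermicSurface n} (p : PolyConservedQuantity n S d)
    (e : Surf) (W : Surf → MV n)
    (hpar : ∀ t : ℝ, ∀ x : Surf,
      fderiv ℝ (fun y => ∑ k ∈ Finset.range (d + 1), t ^ k • p.coeff k y) x e
        + t • wedge n (S.F x) (W x) (∑ k ∈ Finset.range (d + 1), t ^ k • p.coeff k x) = 0)
    (x : Surf) :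
    ∀ k < d + 2, fderiv ℝ (p.coeff k) x e + wedge n (S.F x) (W x) (pprevc p k x) = 0 := by
  have hdiff : ∀ k, DifferentiableAt ℝ (p.coeff k) x :=
    fun k => ((p.smooth k).differentiable (by simp)).differentiableAt
  apply poly_vec_zero (d + 2)
  intro t
  have expand : ∑ k ∈ Finset.range (d + 2),
        t ^ k • (fderiv ℝ (p.coeff k) x e + wedge n (S.F x) (W x) (pprevc p k x))
      = fderiv ℝ (fun y => ∑ k ∈ Finset.range (d + 1), t ^ k • p.coeff k y) x e
        + t • wedge n (S.F x) (W x) (∑ k ∈ Finset.range (d + 1), t ^ k • p.coeff k x) := by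
    simp only [smul_add, Finset.sum_add_distrib]
    congr 1
    · rw [Finset.sum_range_succ, fderiv_sum_smul hdiff]
      have hz : p.coeff (d + 1) = 0 := p.coeff_eq_zero _ (lt_add_one d)
      rw [hz]
      have : fderiv ℝ (0 : Surf → MV n) x = 0 := fderiv_const_apply 0
      rw [this]
      simp
    · rw [Finset.sum_range_succ']
      have h0 : t ^ 0 • wedge n (S.F x) (W x) (pprevc p 0 x) = 0 := by
        show t ^ 0 • wedge n (S.F x) (W x) 0 = 0
        rw [wedge_zero_right]; simp
      rw [h0, add_zero]
      rw [wedge_sum_right, Finset.smul_sum]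
      exact Finset.sum_congr rfl fun k _ => by
        show t ^ (k + 1) • wedge n (S.F x) (W x) (p.coeff k x)
          = t • wedge n (S.F x) (W x) (t ^ k • p.coeff k x)
        rw [wedge_smul_right, smul_smul, pow_succ]; ring_nf
  rw [expand]
  exact hpar t x

end DarbouxAux

set_option maxHeartbeats 1600000 in
/-- Theorem: any Darboux transform of a special isothermic surface of type `d`
is special isothermic of type `d+1`, with `p̂(0) = p(0)`. -/
theorem darboux_transform_type_succ (n d : ℕ) (S : IsothermicSurface n)
    (p : PolyConservedQuantity n S d) (m : ℝ) (hm : m ≠ 0)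
    (D : DarbouxTransform n S m) (T : IsothermicSurface n)
    (hT : T.F = D.G) (hg : GaugeRel n S T m) :
    ∃ ph : PolyConservedQuantity n T (d + 1),
      ∀ x, ph.coeff 0 x = p.coeff 0 x := by
  classical
  -- `(F,G)` is nowhere zero
  have hgne : ∀ x, mink n (S.F x) (T.F x) ≠ 0 := by
    intro x
    rw [hT]
    exact mink_ne_zero_of_null (S.F x) (D.G x) (S.F_ne x) (S.F_null x)
      (D.G_null x) (D.disjoint x)
  -- the hierarchy of equations for `p`
  have hier₁ : ∀ x, ∀ k < d + 2,
      fderiv ℝ (p.coeff k) x du + wedge n (S.F x) (S.W₁ x) (pprevc p k x) = 0 :=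
    fun x => hierarchy p du S.W₁ (fun t x => (p.conserved t x).1) x
  have hier₂ : ∀ x, ∀ k < d + 2,
      fderiv ℝ (p.coeff k) x dv + wedge n (S.F x) (S.W₂ x) (pprevc p k x) = 0 :=
    fun x => hierarchy p dv S.W₂ (fun t x => (p.conserved t x).2) x
  have hfdzero : ∀ x : Surf, fderiv ℝ (p.coeff (d + 1)) x = 0 := by
    intro x
    rw [p.coeff_eq_zero (d + 1) (lt_add_one d)]
    exact fderiv_const_apply 0
  -- `η p_d = 0`
  have heta : ∀ x, wedge n (S.F x) (S.W₁ x) (p.coeff d x) = 0 := by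
    intro x
    have h := hier₁ x (d + 1) (by omega)
    have hpv : pprevc p (d + 1) x = p.coeff d x := rfl
    rw [hpv, hfdzero x] at h
    simpa using h
  -- `(F, p_d) = 0` everywhere
  have hBd : ∀ x, mink n (S.F x) (p.coeff d x) = 0 := by
    intro x
    by_contra hne
    -- then `W₁` is a multiple of `F`
    have h := heta x
    unfold wedge at h
    have hW : S.W₁ x = (mink n (S.W₁ x) (p.coeff d x)
        / mink n (S.F x) (p.coeff d x)) • S.F x := by
      have h2 := sub_eq_zero.mp h
      calc S.W₁ x = (mink n (S.F x) (p.coeff d x))⁻¹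
            • (mink n (S.F x) (p.coeff d x) • S.W₁ x) := by
            rw [smul_smul, inv_mul_cancel₀ hne, one_smul]
        _ = (mink n (S.F x) (p.coeff d x))⁻¹
            • (mink n (S.W₁ x) (p.coeff d x) • S.F x) := by rw [h2]
        _ = (mink n (S.W₁ x) (p.coeff d x)
            / mink n (S.F x) (p.coeff d x)) • S.F x := by
            rw [smul_smul]; congr 1; ring
    -- so `η` kills `G`, contradicting that `G` is immersed and `∇ᵐ`-parallel
    have hwg : wedge n (S.F x) (S.W₁ x) (D.G x) = 0 := by
      rw [hW]
      unfold wedge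
      rw [mink_smul_left]
      module
    have hpar := (D.parallel x).1
    rw [hwg, smul_zero, add_zero] at hpar
    have hGu : pd du D.G x ≠ 0 := by
      have h3 := (D.immersed x).ne_zero 1
      simpa using h3
    exact hGu hpar
  -- smoothness of the new coefficients
  have hprevsm : ∀ k, ContDiff ℝ (⊤ : ℕ∞) (pprevc p k) := by
    intro k
    match k with
    | 0 => exact contDiff_const
    | (i + 1) => exact p.smooth i
  have hsm : ∀ k, ContDiff ℝ (⊤ : ℕ∞) (phc T p m k) := by
    intro k
    match k with
    | 0 => exact p.smooth 0
    | (j + 1) =>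
      refine ContDiff.add (ContDiff.sub (ContDiff.add (ContDiff.sub (p.smooth (j + 1))
        ((p.smooth j).const_smul m⁻¹)) ?_) ?_) ?_
      · exact ((contDiff_const.mul ((mink_contDiff T.smooth_F (p.smooth j)).div
          (mink_contDiff S.smooth_F T.smooth_F) hgne))).smul S.smooth_F
      · exact ((contDiff_const.mul ((mink_contDiff S.smooth_F (p.smooth j)).div
          (mink_contDiff S.smooth_F T.smooth_F) hgne))).smul T.smooth_F
      · exact ((contDiff_const.mul ((mink_contDiff S.smooth_F (hprevsm j)).div
          (mink_contDiff S.smooth_F T.smooth_F) hgne))).smul T.smooth_F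
  -- vanishing of the high coefficients
  have hzero : ∀ k, d + 1 < k → phc T p m k = 0 := by
    intro k hk
    match k with
    | (j + 1) =>
      funext x
      have h1 : p.coeff (j + 1) x = 0 := by
        rw [p.coeff_eq_zero (j + 1) (by omega)]; rfl
      have h2 : p.coeff j x = 0 := by
        rw [p.coeff_eq_zero j (by omega)]; rfl
      have h3 : mink n (S.F x) (pprevc p j x) = 0 := by
        match j, hk with
        | (i + 1), hk =>
          have hpv : pprevc p (i + 1) x = p.coeff i x := rfl
          rw [hpv]
          rcases Nat.lt_or_ge d i with hi | hi
          · rw [p.coeff_eq_zero i hi]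
            show mink n (S.F x) 0 = 0
            exact mink_zero_right n _
          · have : i = d := by omega
            rw [this]; exact hBd x
      show p.coeff (j + 1) x - m⁻¹ • p.coeff j x
        + (m⁻¹ * (mink n (T.F x) (p.coeff j x) / mink n (S.F x) (T.F x))) • S.F x
        - (m⁻¹ * (mink n (S.F x) (p.coeff j x) / mink n (S.F x) (T.F x))) • T.F x
        + (m⁻¹ * m⁻¹ * (mink n (S.F x) (pprevc p j x) / mink n (S.F x) (T.F x))) • T.F x
        = 0
      rw [h1, h2, h3]
      simp [mink_zero_right]
    -- the key algebraic identity: the new polynomial is the gauged old one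
  have hkey : ∀ t : ℝ, t ≠ m → ∀ x : Surf,
      (∑ k ∈ Finset.range (d + 2), t ^ k • phc T p m k x)
        = gaugeG n (S.F x) (T.F x) (1 - t / m) ((1 - t / m) • pcEval p t x) := by
    intro t ht x
    have hc : 1 - t / m ≠ 0 := by
      intro h
      have h' := sub_eq_zero.mp h
      exact ht ((div_eq_one_iff_eq hm).mp h'.symm)
    have hg0 : mink n (S.F x) (T.F x) ≠ 0 := hgne x
    have hα : mink n (T.F x) (pcEval p t x)
        = ∑ k ∈ Finset.range (d + 1), t ^ k * mink n (T.F x) (p.coeff k x) := by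
      show mink n (T.F x) (∑ k ∈ Finset.range (d + 1), t ^ k • p.coeff k x) = _
      rw [mink_sum_right]
      exact Finset.sum_congr rfl fun k _ => mink_smul_right n _ _ _
    have hβ : mink n (S.F x) (pcEval p t x)
        = ∑ k ∈ Finset.range (d + 1), t ^ k * mink n (S.F x) (p.coeff k x) := by
      show mink n (S.F x) (∑ k ∈ Finset.range (d + 1), t ^ k • p.coeff k x) = _
      rw [mink_sum_right]
      exact Finset.sum_congr rfl fun k _ => mink_smul_right n _ _ _
    have h1 : ∑ j ∈ Finset.range (d + 1), t ^ (j + 1) • p.coeff (j + 1) x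
        = pcEval p t x - p.coeff 0 x := by
      have e1 : ∑ k ∈ Finset.range (d + 2), t ^ k • p.coeff k x = pcEval p t x := by
        rw [Finset.sum_range_succ, p.coeff_eq_zero (d + 1) (lt_add_one d)]
        simp [pcEval]
      rw [Finset.sum_range_succ'] at e1
      simp only [pow_zero, one_smul] at e1
      exact eq_sub_of_add_eq e1
    have h2 : ∑ j ∈ Finset.range (d + 1), t ^ (j + 1) • (m⁻¹ • p.coeff j x)
        = (t * m⁻¹) • pcEval p t x := by
      show _ = (t * m⁻¹) • ∑ k ∈ Finset.range (d + 1), t ^ k • p.coeff k x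
      rw [Finset.smul_sum]
      exact Finset.sum_congr rfl fun j _ => by
        rw [smul_smul, smul_smul]; congr 1; ring
    have h3 : ∑ j ∈ Finset.range (d + 1),
          t ^ (j + 1) • ((m⁻¹ * (mink n (T.F x) (p.coeff j x)
            / mink n (S.F x) (T.F x))) • S.F x)
        = (t * m⁻¹ * (mink n (T.F x) (pcEval p t x)
            / mink n (S.F x) (T.F x))) • S.F x := by
      calc ∑ j ∈ Finset.range (d + 1),
            t ^ (j + 1) • ((m⁻¹ * (mink n (T.F x) (p.coeff j x)
              / mink n (S.F x) (T.F x))) • S.F x)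
          = (∑ j ∈ Finset.range (d + 1), t ^ (j + 1) * (m⁻¹
              * (mink n (T.F x) (p.coeff j x) / mink n (S.F x) (T.F x)))) • S.F x := by
            rw [Finset.sum_smul]
            exact Finset.sum_congr rfl fun j _ => (smul_smul _ _ _)
        _ = _ := by
            congr 1
            rw [hα, Finset.sum_div, Finset.mul_sum]
            exact Finset.sum_congr rfl fun j _ => by ring
    have h4 : ∑ j ∈ Finset.range (d + 1),
          t ^ (j + 1) • ((m⁻¹ * (mink n (S.F x) (p.coeff j x)
            / mink n (S.F x) (T.F x))) • T.F x)
        = (t * m⁻¹ * (mink n (S.F x) (pcEval p t x)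
            / mink n (S.F x) (T.F x))) • T.F x := by
      calc ∑ j ∈ Finset.range (d + 1),
            t ^ (j + 1) • ((m⁻¹ * (mink n (S.F x) (p.coeff j x)
              / mink n (S.F x) (T.F x))) • T.F x)
          = (∑ j ∈ Finset.range (d + 1), t ^ (j + 1) * (m⁻¹
              * (mink n (S.F x) (p.coeff j x) / mink n (S.F x) (T.F x)))) • T.F x := by
            rw [Finset.sum_smul]
            exact Finset.sum_congr rfl fun j _ => (smul_smul _ _ _)
        _ = _ := by
            congr 1
            rw [hβ, Finset.sum_div, Finset.mul_sum]
            exact Finset.sum_congr rfl fun j _ => by ring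
    have h5 : ∑ j ∈ Finset.range (d + 1),
          t ^ (j + 1) • ((m⁻¹ * m⁻¹ * (mink n (S.F x) (pprevc p j x)
            / mink n (S.F x) (T.F x))) • T.F x)
        = (t * t * (m⁻¹ * m⁻¹) * (mink n (S.F x) (pcEval p t x)
            / mink n (S.F x) (T.F x))) • T.F x := by
      rw [Finset.sum_range_succ']
      have hz : t ^ (0 + 1) • ((m⁻¹ * m⁻¹ * (mink n (S.F x) (pprevc p 0 x)
          / mink n (S.F x) (T.F x))) • T.F x) = 0 := by
        show t ^ (0 + 1) • ((m⁻¹ * m⁻¹ * (mink n (S.F x) 0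
          / mink n (S.F x) (T.F x))) • T.F x) = 0
        rw [mink_zero_right]
        simp
      rw [hz, add_zero]
      calc ∑ j ∈ Finset.range d,
            t ^ (j + 1 + 1) • ((m⁻¹ * m⁻¹ * (mink n (S.F x) (pprevc p (j + 1) x)
              / mink n (S.F x) (T.F x))) • T.F x)
          = (∑ j ∈ Finset.range d, t ^ (j + 1 + 1) * (m⁻¹ * m⁻¹
              * (mink n (S.F x) (p.coeff j x) / mink n (S.F x) (T.F x)))) • T.F x := by
            rw [Finset.sum_smul]
            refine Finset.sum_congr rfl fun j _ => ?_
            rw [show pprevc p (j + 1) x = p.coeff j x from rfl]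
            exact smul_smul _ _ _
        _ = _ := by
            congr 1
            rw [hβ, Finset.sum_range_succ, hBd x, mul_zero, add_zero,
              Finset.sum_div, Finset.mul_sum]
            exact Finset.sum_congr rfl fun j _ => by ring
    rw [Finset.sum_range_succ']
    simp only [phc, smul_add, smul_sub, Finset.sum_add_distrib, Finset.sum_sub_distrib]
    rw [h1, h2, h3, h4, h5]
    simp only [gaugeG, mink_smul_right]
    have hdivc : (1 - t / m) * mink n (T.F x) (pcEval p t x)
        / mink n (S.F x) (T.F x) / (1 - t / m)
        = mink n (T.F x) (pcEval p t x) / mink n (S.F x) (T.F x) := by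
      rw [mul_div_assoc, mul_div_cancel_left₀ _ hc]
    rw [hdivc]
    match_scalars <;> field_simp <;> ring
  -- top coefficient is nonzero
  have htop : phc T p m (d + 1) ≠ 0 := by
    intro hz0
    have hpd1 : ∀ y : Surf, p.coeff (d + 1) y = 0 := fun y => by
      rw [p.coeff_eq_zero (d + 1) (lt_add_one d)]; rfl
    have hexp : ∀ y : Surf, p.coeff (d + 1) y - m⁻¹ • p.coeff d y
        + (m⁻¹ * (mink n (T.F y) (p.coeff d y) / mink n (S.F y) (T.F y))) • S.F y
        - (m⁻¹ * (mink n (S.F y) (p.coeff d y) / mink n (S.F y) (T.F y))) • T.F y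
        + (m⁻¹ * m⁻¹ * (mink n (S.F y) (pprevc p d y)
            / mink n (S.F y) (T.F y))) • T.F y = 0 := by
      intro y
      have h := congrFun hz0 y
      simp only [phc, Pi.zero_apply] at h
      exact h
    have hprev0 : ∀ y : Surf, mink n (S.F y) (pprevc p d y) = 0 := by
      intro y
      have h2 := congrArg (mink n (S.F y)) (hexp y)
      simp only [mink_add_right, mink_sub_right, mink_smul_right, mink_zero_right] at h2
      rw [hpd1 y, hBd y, S.F_null y, mink_zero_right] at h2
      have hgy := hgne y
      simp only [mul_zero, zero_mul, zero_div, sub_zero, zero_add, add_zero,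
        zero_sub, neg_zero] at h2
      field_simp [hm, hgy] at h2
      exact h2.trans (mul_zero _)
    have hpd : ∀ y : Surf, p.coeff d y
        = (mink n (T.F y) (p.coeff d y) / mink n (S.F y) (T.F y)) • S.F y := by
      intro y
      have h' := hexp y
      rw [hpd1 y, hBd y, hprev0 y] at h'
      simp only [zero_div, mul_zero, zero_smul, sub_zero, add_zero, zero_sub] at h'
      have h3 : m⁻¹ • p.coeff d y
          = (m⁻¹ * (mink n (T.F y) (p.coeff d y) / mink n (S.F y) (T.F y))) • S.F y :=
        neg_add_eq_zero.mp h'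
      calc p.coeff d y = m • (m⁻¹ • p.coeff d y) := by
            rw [smul_smul, mul_inv_cancel₀ hm, one_smul]
        _ = m • ((m⁻¹ * (mink n (T.F y) (p.coeff d y)
            / mink n (S.F y) (T.F y))) • S.F y) := by rw [h3]
        _ = (mink n (T.F y) (p.coeff d y) / mink n (S.F y) (T.F y)) • S.F y := by
            rw [smul_smul]; congr 1; field_simp
    -- the coefficient function `a`
    have hasm : ContDiff ℝ (⊤ : ℕ∞) fun y =>
        mink n (T.F y) (p.coeff d y) / mink n (S.F y) (T.F y) :=
      (mink_contDiff T.smooth_F (p.smooth d)).div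
        (mink_contDiff S.smooth_F T.smooth_F) hgne
    have hax : ∀ y : Surf,
        mink n (T.F y) (p.coeff d y) / mink n (S.F y) (T.F y) = 0 := by
      intro y
      have hfd : fderiv ℝ (p.coeff d) y du
          = (mink n (T.F y) (p.coeff d y) / mink n (S.F y) (T.F y))
              • fderiv ℝ S.F y du
            + (fderiv ℝ (fun z => mink n (T.F z) (p.coeff d z)
                / mink n (S.F z) (T.F z)) y du) • S.F y := by
        have hfun : p.coeff d = fun z =>
            (mink n (T.F z) (p.coeff d z) / mink n (S.F z) (T.F z)) • S.F z :=
          funext hpd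
        nth_rewrite 1 [hfun]
        rw [fderiv_fun_smul ((hasm.differentiable (by simp)).differentiableAt)
          ((S.smooth_F.differentiable (by simp)).differentiableAt)]
        simp [ContinuousLinearMap.add_apply, ContinuousLinearMap.smul_apply,
          ContinuousLinearMap.smulRight_apply]
      have h := hier₁ y d (by omega)
      rw [hfd] at h
      have hw : wedge n (S.F y) (S.W₁ y) (pprevc p d y)
          = (-(mink n (S.W₁ y) (pprevc p d y))) • S.F y := by
        unfold wedge
        rw [hprev0 y]
        module
      rw [hw] at h
      have hli := S.immersed y
      have hsum : ∑ i : Fin 3,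
          ![fderiv ℝ (fun z => mink n (T.F z) (p.coeff d z)
              / mink n (S.F z) (T.F z)) y du - mink n (S.W₁ y) (pprevc p d y),
            mink n (T.F y) (p.coeff d y) / mink n (S.F y) (T.F y), (0:ℝ)] i
            • ![S.F y, pd du S.F y, pd dv S.F y] i = 0 := by
        rw [Fin.sum_univ_three]
        simp only [Matrix.cons_val_zero, Matrix.cons_val_one, Matrix.head_cons,
          Matrix.cons_val_two, Matrix.tail_cons]
        show (fderiv ℝ (fun z => mink n (T.F z) (p.coeff d z)
              / mink n (S.F z) (T.F z)) y du - mink n (S.W₁ y) (pprevc p d y))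
              • S.F y
            + (mink n (T.F y) (p.coeff d y) / mink n (S.F y) (T.F y))
              • fderiv ℝ S.F y du
            + (0:ℝ) • fderiv ℝ S.F y dv = 0
        calc (fderiv ℝ (fun z => mink n (T.F z) (p.coeff d z)
              / mink n (S.F z) (T.F z)) y du - mink n (S.W₁ y) (pprevc p d y))
              • S.F y
            + (mink n (T.F y) (p.coeff d y) / mink n (S.F y) (T.F y))
              • fderiv ℝ S.F y du
            + (0:ℝ) • fderiv ℝ S.F y dv
            = ((mink n (T.F y) (p.coeff d y) / mink n (S.F y) (T.F y))
                • fderiv ℝ S.F y du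
              + (fderiv ℝ (fun z => mink n (T.F z) (p.coeff d z)
                  / mink n (S.F z) (T.F z)) y du) • S.F y)
              + (-(mink n (S.W₁ y) (pprevc p d y))) • S.F y := by module
          _ = 0 := h
      have h0 := Fintype.linearIndependent_iff.mp hli _ hsum 1
      simpa using h0
    have hzero' : p.coeff d = 0 := funext fun y => by
      have := hpd y
      rw [hax y, zero_smul] at this
      exact this
    exact p.top_ne hzero'
  -- conservation
  have hpdiff : ∀ k (x : Surf), DifferentiableAt ℝ (phc T p m k) x :=
    fun k x => ((hsm k).differentiable (by simp)).differentiableAt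
  have hPsm : ∀ t : ℝ, ContDiff ℝ (⊤ : ℕ∞) (pcEval p t) := by
    intro t
    show ContDiff ℝ (⊤ : ℕ∞) fun x => ∑ k ∈ Finset.range (d + 1), t ^ k • p.coeff k x
    exact ContDiff.sum fun k _ => (p.smooth k).const_smul _
  have main : ∀ (e : Surf) (SW TW : Surf → MV n),
      (∀ t : ℝ, ∀ x : Surf, fderiv ℝ (pcEval p t) x e
          + t • wedge n (S.F x) (SW x) (pcEval p t x) = 0) →
      (∀ t : ℝ, t ≠ m → ∀ s : Surf → MV n, ContDiff ℝ (⊤ : ℕ∞) s → ∀ x : Surf,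
        fderiv ℝ (fun y => gaugeG n (S.F y) (T.F y) (1 - t / m) (s y)) x e
          + t • wedge n (T.F x) (TW x) (gaugeG n (S.F x) (T.F x) (1 - t / m) (s x))
        = gaugeG n (S.F x) (T.F x) (1 - t / m)
            (fderiv ℝ s x e + t • wedge n (S.F x) (SW x) (s x))) →
      ∀ (t : ℝ) (x : Surf),
        fderiv ℝ (fun y => ∑ k ∈ Finset.range (d + 2), t ^ k • phc T p m k y) x e
          + t • wedge n (T.F x) (TW x)
              (∑ k ∈ Finset.range (d + 2), t ^ k • phc T p m k x) = 0 := by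
    intro e SW TW hparS hgauge t x
    have hAt : ∀ τ : ℝ,
        fderiv ℝ (fun y => ∑ k ∈ Finset.range (d + 2), τ ^ k • phc T p m k y) x e
          = ∑ k ∈ Finset.range (d + 2), τ ^ k • fderiv ℝ (phc T p m k) x e :=
      fun τ => fderiv_sum_smul (fun k => hpdiff k x) _ τ e
    have hwc : Continuous fun z : MV n => wedge n (T.F x) (TW x) z := by
      unfold wedge
      exact ((mink_continuous_right (T.F x)).smul continuous_const).sub
        ((mink_continuous_right (TW x)).smul continuous_const)
    have hΦcont : Continuous fun τ : ℝ =>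
        (∑ k ∈ Finset.range (d + 2), τ ^ k • fderiv ℝ (phc T p m k) x e)
          + τ • wedge n (T.F x) (TW x)
              (∑ k ∈ Finset.range (d + 2), τ ^ k • phc T p m k x) := by
      apply Continuous.add
      · exact continuous_finset_sum _ fun k _ => (continuous_pow k).smul continuous_const
      · exact continuous_id.smul (hwc.comp
          (continuous_finset_sum _ fun k _ => (continuous_pow k).smul continuous_const))
    have hne : Set.EqOn (fun τ : ℝ =>
        (∑ k ∈ Finset.range (d + 2), τ ^ k • fderiv ℝ (phc T p m k) x e)
          + τ • wedge n (T.F x) (TW x)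
              (∑ k ∈ Finset.range (d + 2), τ ^ k • phc T p m k x))
        (fun _ : ℝ => (0 : MV n)) ({m}ᶜ : Set ℝ) := by
      intro τ hτ'
      have hτ : τ ≠ m := Set.mem_compl_singleton_iff.mp hτ'
      have hfun : (fun y => ∑ k ∈ Finset.range (d + 2), τ ^ k • phc T p m k y)
          = fun y => gaugeG n (S.F y) (T.F y) (1 - τ / m) ((1 - τ / m) • pcEval p τ y) :=
        funext fun y => hkey τ hτ y
      have hssm : ContDiff ℝ (⊤ : ℕ∞) fun y => (1 - τ / m) • pcEval p τ y :=
        (hPsm τ).const_smul _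
      have hgeq := hgauge τ hτ (fun y => (1 - τ / m) • pcEval p τ y) hssm x
      beta_reduce at hgeq
      have hinner : fderiv ℝ (fun y => (1 - τ / m) • pcEval p τ y) x e
          + τ • wedge n (S.F x) (SW x) ((1 - τ / m) • pcEval p τ x) = 0 := by
        rw [fderiv_fun_const_smul ((hPsm τ).differentiable (by simp)).differentiableAt]
        rw [wedge_smul_right]
        calc ((1 - τ / m) • fderiv ℝ (pcEval p τ) x) e
              + τ • ((1 - τ / m) • wedge n (S.F x) (SW x) (pcEval p τ x))
            = (1 - τ / m) • (fderiv ℝ (pcEval p τ) x e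
                + τ • wedge n (S.F x) (SW x) (pcEval p τ x)) := by
              rw [ContinuousLinearMap.smul_apply]
              module
          _ = 0 := by rw [hparS τ x, smul_zero]
      rw [hinner] at hgeq
      have hg00 : gaugeG n (S.F x) (T.F x) (1 - τ / m) 0 = 0 := by
        simp [gaugeG, mink_zero_right]
      rw [hg00] at hgeq
      rw [← hfun] at hgeq
      rw [← hkey τ hτ x] at hgeq
      rw [hAt τ] at hgeq
      exact hgeq
    have hext := Continuous.ext_on (dense_compl_singleton m) hΦcont continuous_const hne
    have hfin := congrFun hext t
    rw [hAt t]
    exact hfin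
  have hconsv : ∀ t : ℝ, ParallelSection n T t
      (fun x => ∑ k ∈ Finset.range (d + 2), t ^ k • phc T p m k x) := by
    intro t x
    exact ⟨main du S.W₁ T.W₁ (fun τ y => (p.conserved τ y).1)
        (fun τ hτ s hs y => (hg τ hτ s hs y).1) t x,
      main dv S.W₂ T.W₂ (fun τ y => (p.conserved τ y).2)
        (fun τ hτ s hs y => (hg τ hτ s hs y).2) t x⟩
  exact ⟨⟨phc T p m, hsm, hzero, htop, hconsv⟩, fun x => rfl⟩
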